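/- If the permutation (·) defined by F_{(i)} = E_i^c is decreasing, then μ_𝒜(x, α) = Σ_{i=0}^{κ-1} μ_{κ-1-i} · 1_{[A_i, A_{i+1})}(α) for every α ∈ [0,∞), with A_κ = +∞. -/

import Mathlib

open scoped Classical

/-- `𝒜` is a family of conditional aggregation operators (FCA) with respect to the
collection `𝓔`: every operator is nonnegative, monotone in the coordinates of the
conditioning set, vanishes on the indicator of the complement, and `𝒜(·|∅) = 0`. -/
def IsFCA (n : ℕ) (𝓔 : Finset (Finset (Fin n)))
    (𝒜 : Finset (Fin n) → (Fin n → ℝ) → ℝ) : Prop :=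
  (∀ E ∈ 𝓔, ∀ x : Fin n → ℝ, 0 ≤ 𝒜 E x) ∧
  (∀ E ∈ 𝓔, E ≠ ∅ → ∀ x y : Fin n → ℝ, (∀ i ∈ E, x i ≤ y i) → 𝒜 E x ≤ 𝒜 E y) ∧
  (∀ E ∈ 𝓔, E ≠ ∅ → 𝒜 E (fun i => if i ∈ E then 0 else 1) = 0) ∧
  (∀ x : Fin n → ℝ, 𝒜 ∅ x = 0)

/-- `μ` is a monotone measure on the complements of the sets of `𝓔`:
`μ ∅ = 0`, nonnegative, and monotone. -/
def IsMonMeasure (n : ℕ) (𝓔 : Finset (Finset (Fin n)))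
    (μ : Finset (Fin n) → ℝ) : Prop :=
  μ ∅ = 0 ∧ (∀ E ∈ 𝓔, 0 ≤ μ Eᶜ) ∧
  (∀ E ∈ 𝓔, ∀ F ∈ 𝓔, Eᶜ ⊆ Fᶜ → μ Eᶜ ≤ μ Fᶜ)

/-- The generalized survival function
`μ_𝒜(x, α) = min { μ(Eᶜ) : 𝒜(x|E) ≤ α, E ∈ 𝓔 }`. -/
noncomputable def gsf {n : ℕ} (𝓔 : Finset (Finset (Fin n)))
    (𝒜 : Finset (Fin n) → (Fin n → ℝ) → ℝ)
    (μ : Finset (Fin n) → ℝ) (x : Fin n → ℝ) (α : ℝ) : ℝ :=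
  sInf {m : ℝ | ∃ E ∈ 𝓔, 𝒜 E x ≤ α ∧ m = μ Eᶜ}

/-! With the sets enumerated so that `A_i = 𝒜(x|E_i)` increases and `μ(E_iᶜ)` decreases,
the minimum defining `μ_𝒜(x, α)` is attained at the last index `i` with `A_i ≤ α`
(there is one, as `𝒜(x|∅) = 0 ≤ α`). That index is also the only `i` with
`α ∈ [A_i, A_{i+1})`, so exactly one summand survives, and it is `μ(E_iᶜ)`. -/

/-- The indicator of `[A_i, A_{i+1})`, with `A_κ = +∞`. -/
noncomputable def stepIndicator {κ : ℕ} (A : Fin κ → ℝ) (i : Fin κ) (α : ℝ) : ℝ :=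
  if h : (i : ℕ) + 1 < κ then
    Set.indicator (Set.Ico (A i) (A ⟨(i : ℕ) + 1, h⟩)) (fun _ => (1 : ℝ)) α
  else
    Set.indicator (Set.Ici (A i)) (fun _ => (1 : ℝ)) α

theorem exists_isGreatest_le {ι β : Type*} [Fintype ι] [LinearOrder ι] [LinearOrder β]
    (A : ι → β) {α : β} (h : ∃ j, A j ≤ α) : ∃ i, IsGreatest {j | A j ≤ α} i := by
  obtain ⟨j, hj⟩ := h
  have hne : (Finset.univ.filter fun j => A j ≤ α).Nonempty := ⟨j, by simpa using hj⟩
  exact ⟨_, by simpa using Finset.isGreatest_max' _ hne⟩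

section stepIndicator

variable {κ : ℕ} {A : Fin κ → ℝ} {α : ℝ} {i : Fin κ}

theorem stepIndicator_eq_ite (hA : Monotone A) (hi : IsGreatest {j | A j ≤ α} i)
    (j : Fin κ) : stepIndicator A j α = if j = i then 1 else 0 := by
  have hAi : A i ≤ α := hi.1
  have hgt : ∀ k, i < k → α < A k := fun k hik => lt_of_not_ge fun hk => (hi.2 hk).not_gt hik
  unfold stepIndicator
  rcases lt_trichotomy j i with hji | rfl | hij
  · have hj1 : (j : ℕ) + 1 < κ := by omega
    have hAj1 : A ⟨(j : ℕ) + 1, hj1⟩ ≤ α := (hA (Fin.mk_le_of_le_val hji)).trans hAi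
    simp [hj1, hji.ne, hAj1]
  · by_cases h : (j : ℕ) + 1 < κ
    · simp [h, hAi, hgt ⟨(j : ℕ) + 1, h⟩ (Fin.mk_lt_of_lt_val (by simp))]
    · simp [h, hAi]
  · simp [hij.ne', hgt j hij]

theorem sum_mul_stepIndicator (hA : Monotone A) (hi : IsGreatest {j | A j ≤ α} i)
    (c : Fin κ → ℝ) : ∑ j, c j * stepIndicator A j α = c i := by
  simp [stepIndicator_eq_ite hA hi]

end stepIndicator

theorem gsf_eq_of_isGreatest {n : ℕ} {ι : Type*} [Preorder ι] {𝓔 : Finset (Finset (Fin n))}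
    {𝒜 : Finset (Fin n) → (Fin n → ℝ) → ℝ} {μ : Finset (Fin n) → ℝ} {x : Fin n → ℝ} {α : ℝ}
    {E : ι → Finset (Fin n)} (hmem : ∀ j, E j ∈ 𝓔) (hsurj : ∀ F ∈ 𝓔, ∃ j, E j = F)
    (hμ : Antitone fun j => μ (E j)ᶜ) {i : ι} (hi : IsGreatest {j | 𝒜 (E j) x ≤ α} i) :
    gsf 𝓔 𝒜 μ x α = μ (E i)ᶜ := by
  refine IsLeast.csInf_eq ⟨⟨E i, hmem i, hi.1, rfl⟩, ?_⟩
  rintro _ ⟨F, hF, hFα, rfl⟩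
  obtain ⟨j, rfl⟩ := hsurj F hF
  exact hμ (hi.2 hFα)

theorem stmt10_general {n κ : ℕ} (𝓔 : Finset (Finset (Fin n)))
    (𝒜 : Finset (Fin n) → (Fin n → ℝ) → ℝ) (μ : Finset (Fin n) → ℝ)
    (x : Fin n → ℝ)
    (hempty : ∅ ∈ 𝓔)
    (hA : IsFCA n 𝓔 𝒜)
    (hκ : 𝓔.card = κ)
    (Estar : Fin κ → Finset (Fin n))
    (hmem : ∀ i, Estar i ∈ 𝓔) (hinj : Function.Injective Estar)
    (hAmono : ∀ i j : Fin κ, i ≤ j → 𝒜 (Estar i) x ≤ 𝒜 (Estar j) x)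
    (Fstar : Fin κ → Finset (Fin n))
    (hμmono : ∀ i j : Fin κ, i ≤ j → μ (Fstar i) ≤ μ (Fstar j))
    (e : Fin κ ≃ Fin κ) (he : ∀ i, Fstar (e i) = (Estar i)ᶜ)
    (hdec : ∀ i : Fin κ, e i = Fin.rev i)
    (α : ℝ) (hα : 0 ≤ α) :
    gsf 𝓔 𝒜 μ x α =
      ∑ i : Fin κ,
        μ (Fstar (Fin.rev i)) *
          (if h : (i : ℕ) + 1 < κ then
            Set.indicator
              (Set.Ico (𝒜 (Estar i) x) (𝒜 (Estar ⟨(i : ℕ) + 1, h⟩) x))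
              (fun _ => (1 : ℝ)) α
          else
            Set.indicator (Set.Ici (𝒜 (Estar i) x)) (fun _ => (1 : ℝ)) α) := by
  have hsurj : ∀ F ∈ 𝓔, ∃ j, Estar j = F := fun F hF => by
    obtain ⟨j, -, hj⟩ := Finset.surjOn_of_injOn_of_card_le (s := Finset.univ) Estar
      (fun j _ => hmem j) hinj.injOn (by simp [hκ]) hF
    exact ⟨j, hj⟩
  have hμE : ∀ j, μ (Estar j)ᶜ = μ (Fstar (Fin.rev j)) := fun j => by rw [← he, hdec]
  have hμanti : Antitone fun j => μ (Estar j)ᶜ := fun j k hjk => by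
    simpa only [hμE] using hμmono _ _ (Fin.rev_le_rev.mpr hjk)
  obtain ⟨j₀, hj₀⟩ := hsurj ∅ hempty
  obtain ⟨i, hi⟩ := exists_isGreatest_le (fun j => 𝒜 (Estar j) x)
    ⟨j₀, by simpa [hj₀, hA.2.2.2 x] using hα⟩
  rw [gsf_eq_of_isGreatest hmem hsurj hμanti hi, hμE]
  exact (sum_mul_stepIndicator hAmono hi fun j => μ (Fstar (Fin.rev j))).symm

/-- Corollary: if the permutation `(·)` (with `F_{(i)} = E_iᶜ`) is decreasing,
i.e. `(i) = κ-1-i`, then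
`μ_𝒜(x,α) = Σ_{i=0}^{κ-1} μ_{κ-1-i} · 1_{[A_i, A_{i+1})}(α)` with `A_κ = +∞`. -/
theorem stmt10 {n κ : ℕ} (𝓔 : Finset (Finset (Fin n)))
    (𝒜 : Finset (Fin n) → (Fin n → ℝ) → ℝ) (μ : Finset (Fin n) → ℝ)
    (x : Fin n → ℝ)
    (hempty : ∅ ∈ 𝓔) (hU : (Finset.univ : Finset (Fin n)) ∈ 𝓔)
    (hA : IsFCA n 𝓔 𝒜) (hμ : IsMonMeasure n 𝓔 μ) (hx : ∀ i, 0 ≤ x i)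
    (hκ : 𝓔.card = κ)
    (Estar : Fin κ → Finset (Fin n))
    (hmem : ∀ i, Estar i ∈ 𝓔) (hinj : Function.Injective Estar)
    (hAmono : ∀ i j : Fin κ, i ≤ j → 𝒜 (Estar i) x ≤ 𝒜 (Estar j) x)
    (Fstar : Fin κ → Finset (Fin n))
    (hFmem : ∀ j, (Fstar j)ᶜ ∈ 𝓔) (hFinj : Function.Injective Fstar)
    (hμmono : ∀ i j : Fin κ, i ≤ j → μ (Fstar i) ≤ μ (Fstar j))
    (e : Fin κ ≃ Fin κ) (he : ∀ i, Fstar (e i) = (Estar i)ᶜ)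
    (hdec : ∀ i : Fin κ, e i = Fin.rev i)
    (α : ℝ) (hα : 0 ≤ α) :
    gsf 𝓔 𝒜 μ x α =
      ∑ i : Fin κ,
        μ (Fstar (Fin.rev i)) *
          (if h : (i : ℕ) + 1 < κ then
            Set.indicator
              (Set.Ico (𝒜 (Estar i) x) (𝒜 (Estar ⟨(i : ℕ) + 1, h⟩) x))
              (fun _ => (1 : ℝ)) α
          else
            Set.indicator (Set.Ici (𝒜 (Estar i) x)) (fun _ => (1 : ℝ)) α) :=
  stmt10_general 𝓔 𝒜 μ x hempty hA hκ Estar hmem hinj hAmono Fstar hμmono e he hdec α hα
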